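/- arXiv:1905.08322 — 4 statements merged into one kernel-verified Lean document; each statement's English description precedes it below -/
import Mathlib

section
/- Necessity of the relaxation constraints: Let μ be any probability measure on {0,1}^L and define the block matrix M(μ) ∈ ℝ^{2L×2L} with 2×2 blocks M(μ)_pp = diag(μ_p^(1)) and M(μ)_pq = μ_pq^(2) for p ≠ q. Then M(μ) is symmetric positive semidefinite, every off-diagonal block M(μ)_pq is entrywise nonnegative, and M(μ)_pq 1₂ = μ_p^(1) for all p ≠ q. In particular, if μ ∈ Π(ρ) then M(μ) is feasible for the primal 2-marginal SDP associated with ρ. -/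
open Matrix BigOperators

noncomputable section

abbrev Idx (L : ℕ) := Fin L × Fin 2

/-- The fixed 1-marginal `μ_p^(1) = (1 - ρ_p, ρ_p)ᵀ`. -/
def mu1 {L : ℕ} (ρ : Fin L → ℝ) (p : Fin L) (t : Fin 2) : ℝ :=
  if t = 0 then 1 - ρ p else ρ p

/-- The 1-marginal of a (signed) measure `μ` on `{0,1}^L`. -/
def marg1 {L : ℕ} (μ : (Fin L → Fin 2) → ℝ) (p : Fin L) (t : Fin 2) : ℝ :=
  ∑ s : Fin L → Fin 2, if s p = t then μ s else 0

/-- The 2-marginal of a (signed) measure `μ` on `{0,1}^L`. -/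
def marg2 {L : ℕ} (μ : (Fin L → Fin 2) → ℝ) (p q : Fin L) (t u : Fin 2) : ℝ :=
  ∑ s : Fin L → Fin 2, if s p = t ∧ s q = u then μ s else 0

/-- The block matrix `M(μ)` with diagonal blocks `diag(μ_p^(1))` and off-diagonal
blocks `μ_pq^(2)`. -/
def momentMatrix {L : ℕ} (μ : (Fin L → Fin 2) → ℝ) : Matrix (Idx L) (Idx L) ℝ :=
  fun a b =>
    if a.1 = b.1 then (if a.2 = b.2 then marg1 μ a.1 a.2 else 0)
    else marg2 μ a.1 b.1 a.2 b.2

/-- Feasibility for the primal 2-marginal SDP. -/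
def PrimalFeasible {L : ℕ} (ρ : Fin L → ℝ) (M : Matrix (Idx L) (Idx L) ℝ) : Prop :=
  M.PosSemidef ∧
  (∀ p q : Fin L, p ≠ q → ∀ t u : Fin 2, 0 ≤ M (p, t) (q, u)) ∧
  (∀ p q : Fin L, p ≠ q → ∀ t : Fin 2, ∑ u : Fin 2, M (p, t) (q, u) = mu1 ρ p t) ∧
  (∀ p : Fin L, ∀ t u : Fin 2, M (p, t) (p, u) = if t = u then mu1 ρ p t else 0)

/-! Writing `v_s` for the one-hot encoding of a configuration `s`, the moment matrix is
`M(μ) = ∑_s μ(s) v_s v_sᵀ`, a nonnegative combination of rank-one positive semidefinite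
matrices. The block constraints are just marginalisation identities. -/

def configVec {L : ℕ} (s : Fin L → Fin 2) (a : Idx L) : ℝ :=
  if s a.1 = a.2 then 1 else 0

lemma configVec_mul_configVec {L : ℕ} (s : Fin L → Fin 2) (a b : Idx L) :
    configVec s a * configVec s b = if s a.1 = a.2 ∧ s b.1 = b.2 then 1 else 0 := by
  simp only [configVec, ite_and, ite_mul, one_mul, zero_mul]

lemma momentMatrix_apply_eq_sum {L : ℕ} (μ : (Fin L → Fin 2) → ℝ) (a b : Idx L) :
    momentMatrix μ a b = ∑ s, μ s * (configVec s a * configVec s b) := by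
  simp only [configVec_mul_configVec, mul_ite, mul_one, mul_zero]
  rcases a with ⟨p, t⟩
  rcases b with ⟨q, u⟩
  by_cases hpq : p = q
  · subst hpq
    by_cases htu : t = u
    · subst htu
      simp [momentMatrix, marg1]
    · simp only [momentMatrix, if_true, if_neg htu]
      refine (Finset.sum_eq_zero fun s _ => if_neg ?_).symm
      rintro ⟨rfl, rfl⟩
      exact htu rfl
  · simp [momentMatrix, marg2, hpq]

lemma momentMatrix_eq_sum_smul_vecMulVec {L : ℕ} (μ : (Fin L → Fin 2) → ℝ) :
    momentMatrix μ = ∑ s, μ s • vecMulVec (configVec s) (configVec s) := by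
  ext a b
  simp [momentMatrix_apply_eq_sum, Matrix.sum_apply, vecMulVec_apply]

lemma posSemidef_momentMatrix {L : ℕ} {μ : (Fin L → Fin 2) → ℝ} (hμ : ∀ s, 0 ≤ μ s) :
    (momentMatrix μ).PosSemidef := by
  rw [momentMatrix_eq_sum_smul_vecMulVec]
  refine posSemidef_sum _ fun s _ => PosSemidef.smul ?_ (hμ s)
  simpa using posSemidef_vecMulVec_self_star (configVec s)

lemma momentMatrix_apply_of_ne {L : ℕ} (μ : (Fin L → Fin 2) → ℝ) {p q : Fin L} (hpq : p ≠ q)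
    (t u : Fin 2) : momentMatrix μ (p, t) (q, u) = marg2 μ p q t u := by
  simp [momentMatrix, hpq]

lemma momentMatrix_apply_self {L : ℕ} (μ : (Fin L → Fin 2) → ℝ) (p : Fin L) (t u : Fin 2) :
    momentMatrix μ (p, t) (p, u) = if t = u then marg1 μ p t else 0 := by
  simp [momentMatrix]

lemma marg2_nonneg {L : ℕ} {μ : (Fin L → Fin 2) → ℝ} (hμ : ∀ s, 0 ≤ μ s)
    (p q : Fin L) (t u : Fin 2) : 0 ≤ marg2 μ p q t u :=
  Finset.sum_nonneg fun s _ => by split_ifs <;> simp [hμ s]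

lemma sum_marg2 {L : ℕ} (μ : (Fin L → Fin 2) → ℝ) (p q : Fin L) (t : Fin 2) :
    ∑ u, marg2 μ p q t u = marg1 μ p t := by
  unfold marg2 marg1
  rw [Finset.sum_comm]
  refine Finset.sum_congr rfl fun s _ => ?_
  simp only [ite_and]
  rw [Finset.sum_ite_irrel, Finset.sum_ite_eq]
  simp

theorem moment_matrix_necessary_general (L : ℕ)
    (μ : (Fin L → Fin 2) → ℝ) (hpos : ∀ s, 0 ≤ μ s) :
    (momentMatrix μ).PosSemidef ∧
    (∀ p q : Fin L, p ≠ q → ∀ t u : Fin 2, 0 ≤ momentMatrix μ (p, t) (q, u)) ∧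
    (∀ p q : Fin L, p ≠ q → ∀ t : Fin 2,
        ∑ u : Fin 2, momentMatrix μ (p, t) (q, u) = marg1 μ p t) ∧
    (∀ ρ : Fin L → ℝ, (∀ p, 0 ≤ ρ p ∧ ρ p ≤ 1) →
        (∀ p t, marg1 μ p t = mu1 ρ p t) →
        PrimalFeasible ρ (momentMatrix μ)) := by
  have hpsd := posSemidef_momentMatrix hpos
  have hnonneg : ∀ p q : Fin L, p ≠ q → ∀ t u : Fin 2, 0 ≤ momentMatrix μ (p, t) (q, u) :=
    fun p q hpq t u => momentMatrix_apply_of_ne μ hpq t u ▸ marg2_nonneg hpos p q t u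
  have hrow : ∀ p q : Fin L, p ≠ q → ∀ t : Fin 2,
      ∑ u : Fin 2, momentMatrix μ (p, t) (q, u) = marg1 μ p t := fun p q hpq t => by
    simp only [momentMatrix_apply_of_ne μ hpq, sum_marg2]
  refine ⟨hpsd, hnonneg, hrow, fun ρ _ hmarg => ⟨hpsd, hnonneg, ?_, ?_⟩⟩
  · intro p q hpq t
    rw [hrow p q hpq t, hmarg]
  · intro p t u
    rw [momentMatrix_apply_self, hmarg]

/-- Necessity of the relaxation constraints: for any probability measure `μ` on
`{0,1}^L`, the moment matrix `M(μ)` is positive semidefinite, has entrywise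
nonnegative off-diagonal blocks, its off-diagonal blocks have row sums `μ_p^(1)`;
and if `μ ∈ Π(ρ)` then `M(μ)` is feasible for the primal 2-marginal SDP. -/
theorem moment_matrix_necessary (L : ℕ) (hL : 2 ≤ L)
    (μ : (Fin L → Fin 2) → ℝ) (hpos : ∀ s, 0 ≤ μ s)
    (hsum : ∑ s : Fin L → Fin 2, μ s = 1) :
    (momentMatrix μ).PosSemidef ∧
    (∀ p q : Fin L, p ≠ q → ∀ t u : Fin 2, 0 ≤ momentMatrix μ (p, t) (q, u)) ∧
    (∀ p q : Fin L, p ≠ q → ∀ t : Fin 2,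
        ∑ u : Fin 2, momentMatrix μ (p, t) (q, u) = marg1 μ p t) ∧
    (∀ ρ : Fin L → ℝ, (∀ p, 0 ≤ ρ p ∧ ρ p ≤ 1) →
        (∀ p t, marg1 μ p t = mu1 ρ p t) →
        PrimalFeasible ρ (momentMatrix μ)) :=
  moment_matrix_necessary_general L μ hpos
end
end

section
/- No strictly feasible primal point: Let L ≥ 2 and let M be any matrix feasible for the primal 2-marginal SDP associated with ρ. Then for each i = 1,…,L−1 the vector u^(i) ∈ ℝ^{2L}, whose i-th 2-block equals (1,1)ᵀ, whose (i+1)-st 2-block equals (−1,−1)ᵀ, and whose other blocks are zero, satisfies M u^(i) = 0. Consequently no feasible M is positive definite, and the primal 2-marginal SDP has no strictly feasible point (so Slater's condition fails). -/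
open Matrix BigOperators

noncomputable section

/-- The vector `u^(i)` whose `i`-th 2-block is `(1,1)ᵀ`, whose `(i+1)`-st 2-block is
`(-1,-1)ᵀ`, and whose other blocks vanish. -/
def uvec {L : ℕ} (i : Fin L) (h : (i : ℕ) + 1 < L) : Idx L → ℝ :=
  fun a => if a.1 = i then 1 else if a.1 = ⟨(i : ℕ) + 1, h⟩ then -1 else 0

/-- The common row sum `μ_p^(1)` of the blocks of a feasible point is what forces each
`u^(i)` into its kernel: `u^(i)` is constant on blocks, with block weights summing to zero. -/
theorem mulVec_eq_zero_of_blockwise_const {m ι κ R : Type*} [Fintype ι] [Fintype κ]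
    [NonUnitalNonAssocSemiring R] (M : Matrix m (ι × κ) R) (c : m → R)
    (hM : ∀ a q, ∑ u, M a (q, u) = c a) (w : ι → R) (hw : ∑ q, w q = 0) :
    M *ᵥ (fun b => w b.1) = 0 := by
  funext a
  calc ∑ b : ι × κ, M a b * w b.1
      = ∑ q, (∑ u, M a (q, u)) * w q := by
        simp only [Fintype.sum_prod_type, Finset.sum_mul]
    _ = c a * ∑ q, w q := by simp only [hM, Finset.mul_sum]
    _ = 0 := by rw [hw, mul_zero]

theorem Matrix.PosDef.mulVec_ne_zero {n R : Type*} [Fintype n] [CommRing R]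
    [PartialOrder R] [StarRing R] {M : Matrix n n R} (hM : M.PosDef) {v : n → R}
    (hv : v ≠ 0) : M *ᵥ v ≠ 0 := by
  intro h
  simpa [h] using hM.dotProduct_mulVec_pos hv

theorem PrimalFeasible.sum_block_eq_mu1 {L : ℕ} {ρ : Fin L → ℝ}
    {M : Matrix (Idx L) (Idx L) ℝ} (hM : PrimalFeasible ρ M) (p q : Fin L) (t : Fin 2) :
    ∑ u : Fin 2, M (p, t) (q, u) = mu1 ρ p t := by
  obtain ⟨-, -, hmarg, hdiag⟩ := hM
  rcases eq_or_ne p q with rfl | hpq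
  · simp [hdiag p t]
  · exact hmarg p q hpq t

theorem sum_uvec_weights_eq_zero {L : ℕ} (i : Fin L) (h : (i : ℕ) + 1 < L) :
    ∑ q : Fin L, (if q = i then (1 : ℝ) else if q = ⟨(i : ℕ) + 1, h⟩ then -1 else 0) = 0 := by
  have hne : (⟨(i : ℕ) + 1, h⟩ : Fin L) ≠ i := fun heq => by simpa using congrArg Fin.val heq
  simp [Finset.sum_ite, Finset.filter_ne', Finset.filter_eq', hne]

theorem uvec_ne_zero {L : ℕ} (i : Fin L) (h : (i : ℕ) + 1 < L) : uvec i h ≠ 0 := by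
  intro h0
  simpa [uvec] using congrFun h0 (i, 0)

theorem PrimalFeasible.mulVec_uvec {L : ℕ} {ρ : Fin L → ℝ} {M : Matrix (Idx L) (Idx L) ℝ}
    (hM : PrimalFeasible ρ M) (i : Fin L) (h : (i : ℕ) + 1 < L) : M *ᵥ uvec i h = 0 :=
  mulVec_eq_zero_of_blockwise_const M (fun a => mu1 ρ a.1 a.2)
    (fun a q => hM.sum_block_eq_mu1 a.1 q a.2) _ (sum_uvec_weights_eq_zero i h)

theorem PrimalFeasible.not_posDef {L : ℕ} (hL : 2 ≤ L) {ρ : Fin L → ℝ}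
    {M : Matrix (Idx L) (Idx L) ℝ} (hM : PrimalFeasible ρ M) : ¬ M.PosDef := fun hPD =>
  have h : ((⟨0, by omega⟩ : Fin L) : ℕ) + 1 < L := by simp only; omega
  hPD.mulVec_ne_zero (uvec_ne_zero _ h) (hM.mulVec_uvec _ h)

theorem no_strictly_feasible_point_general (L : ℕ) (hL : 2 ≤ L) (ρ : Fin L → ℝ) :
    (∀ M : Matrix (Idx L) (Idx L) ℝ, PrimalFeasible ρ M →
        ∀ (i : Fin L) (h : (i : ℕ) + 1 < L), M.mulVec (uvec i h) = 0) ∧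
    (∀ M : Matrix (Idx L) (Idx L) ℝ, PrimalFeasible ρ M → ¬ M.PosDef) ∧
    ¬ (∃ M : Matrix (Idx L) (Idx L) ℝ, PrimalFeasible ρ M ∧ M.PosDef ∧
        ∀ p q : Fin L, p ≠ q → ∀ t u : Fin 2, 0 < M (p, t) (q, u)) :=
  ⟨fun _ hM => hM.mulVec_uvec, fun _ hM => hM.not_posDef hL,
    fun ⟨_, hM, hPD, _⟩ => hM.not_posDef hL hPD⟩

/-- No strictly feasible primal point: every primal feasible `M` annihilates each
vector `u^(i)`, hence is never positive definite, and the primal 2-marginal SDP has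
no strictly feasible point (Slater's condition fails). -/
theorem no_strictly_feasible_point (L : ℕ) (hL : 2 ≤ L) (ρ : Fin L → ℝ)
    (hρ : ∀ p, 0 ≤ ρ p ∧ ρ p ≤ 1) :
    (∀ M : Matrix (Idx L) (Idx L) ℝ, PrimalFeasible ρ M →
        ∀ (i : Fin L) (h : (i : ℕ) + 1 < L), M.mulVec (uvec i h) = 0) ∧
    (∀ M : Matrix (Idx L) (Idx L) ℝ, PrimalFeasible ρ M → ¬ M.PosDef) ∧
    ¬ (∃ M : Matrix (Idx L) (Idx L) ℝ, PrimalFeasible ρ M ∧ M.PosDef ∧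
        ∀ p q : Fin L, p ≠ q → ∀ t u : Fin 2, 0 < M (p, t) (q, u)) :=
  no_strictly_feasible_point_general L hL ρ
end
end

section
/- Row-shift identity for the Y-program value: Let f(Y) be the optimal value of the Y-program. For each i = 1,…,L−1, let P_i ∈ ℝ^{2L} be the vector whose i-th 2-block is 1₂, whose (i+1)-st 2-block is −1₂, and whose other blocks are zero. Then for every symmetric-blocked Y ∈ ℝ^{2L×2L} and every v ∈ ℝ^{2L} with 2-blocks v_q ∈ ℝ², one has f(Y + P_i vᵀ) = f(Y) − v_i·μ_i^(1) − v_{i+1}·μ_{i+1}^(1). -/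
open Matrix BigOperators

noncomputable section

/-- The dual objective `F(Y, {φ_pq, ψ_pq})`. -/
def dualObj {L : ℕ} (ρ : Fin L → ℝ) (Y : Matrix (Idx L) (Idx L) ℝ)
    (φ ψ : Fin L → Fin L → Fin 2 → ℝ) : ℝ :=
  2 * ∑ p : Fin L, ∑ q : Fin L,
      (if p < q then
        (∑ t : Fin 2, φ p q t * mu1 ρ p t) + (∑ u : Fin 2, ψ p q u * mu1 ρ q u)
       else 0)
    - ∑ p : Fin L, ∑ t : Fin 2, Y (p, t) (p, t) * mu1 ρ p t

/-- Set of objective values of the `Y`-program. -/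
def Yvalues {L : ℕ} (ρ : Fin L → ℝ) (C Y : Matrix (Idx L) (Idx L) ℝ) : Set ℝ :=
  {x | ∃ φ ψ : Fin L → Fin L → Fin 2 → ℝ,
    (∀ p q : Fin L, p < q → ∀ t u : Fin 2,
        φ p q t + ψ p q u ≤ C (p, t) (q, u) - Y (p, t) (q, u)) ∧
    x = dualObj ρ Y φ ψ}

/-- The optimal value `f(Y)` of the `Y`-program. -/
def fval {L : ℕ} (ρ : Fin L → ℝ) (C Y : Matrix (Idx L) (Idx L) ℝ) : ℝ :=
  sSup (Yvalues ρ C Y)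

/-- The vector `P_i` whose `i`-th 2-block is `1₂`, whose `(i+1)`-st 2-block is `-1₂`,
and whose other blocks vanish. -/
def Pvec {L : ℕ} (i : Fin L) (h : (i : ℕ) + 1 < L) : Idx L → ℝ :=
  fun a => if a.1 = i then 1 else if a.1 = ⟨(i : ℕ) + 1, h⟩ then -1 else 0

/-! Write `D = P_i vᵀ`. In every block `D_pq` all rows equal `(P_i)_p v_qᵀ`, so the constraint
`φ_pq 1ᵀ + 1 ψ_pqᵀ ≤ C_pq - Y_pq - D_pq` is the constraint for `Y` after replacing `ψ_pq` by
`ψ_pq + (P_i)_p v_q`. Since the objective is affine in `(Y, φ, ψ)`, this bijection of feasible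
sets shifts every objective value, hence the supremum `f`, by one constant. Writing
`w_q = v_q·μ_q`, that constant is `-2 ∑_{p<q} (P_i)_p w_q - ∑_p (P_i)_p w_p
= -2 w_{i+1} - (w_i - w_{i+1})`. The supremum is finite because each `μ_p` is a probability
vector. -/

open Finset

lemma sum_mul_add_sum_mul_le {ι κ : Type*} [Fintype ι] [Fintype κ] {a : ι → ℝ} {b : κ → ℝ}
    (ha : ∀ t, 0 ≤ a t) (hb : ∀ u, 0 ≤ b u) (ha₁ : ∑ t, a t = 1) (hb₁ : ∑ u, b u = 1)
    {x : ι → ℝ} {y : κ → ℝ} {M : ℝ} (h : ∀ t u, x t + y u ≤ M) :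
    ∑ t, x t * a t + ∑ u, y u * b u ≤ M :=
  calc ∑ t, x t * a t + ∑ u, y u * b u
      = (∑ t, x t * a t) * ∑ u, b u + (∑ t, a t) * ∑ u, y u * b u := by rw [ha₁, hb₁]; ring
    _ = ∑ t, ∑ u, (x t + y u) * (a t * b u) := by
        rw [sum_mul_sum, sum_mul_sum, ← sum_add_distrib]
        refine sum_congr rfl fun t _ => ?_
        rw [← sum_add_distrib]
        exact sum_congr rfl fun u _ => by ring
    _ ≤ ∑ t, ∑ u, M * (a t * b u) := by
        gcongr with t _ u _
        exacts [mul_nonneg (ha t) (hb u), h t u]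
    _ = M := by simp only [← mul_sum, ha₁, hb₁, mul_one]

lemma mu1_nonneg {L : ℕ} {ρ : Fin L → ℝ} (hρ : ∀ p, 0 ≤ ρ p ∧ ρ p ≤ 1) (p : Fin L) (t : Fin 2) :
    0 ≤ mu1 ρ p t := by
  unfold mu1
  split_ifs
  exacts [sub_nonneg.2 (hρ p).2, (hρ p).1]

lemma sum_mu1 {L : ℕ} (ρ : Fin L → ℝ) (p : Fin L) : ∑ t, mu1 ρ p t = 1 := by
  simp [Fin.sum_univ_two, mu1]

lemma dualObj_add {L : ℕ} (ρ : Fin L → ℝ) (Y Y' : Matrix (Idx L) (Idx L) ℝ)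
    (φ φ' ψ ψ' : Fin L → Fin L → Fin 2 → ℝ) :
    dualObj ρ (Y + Y') (φ + φ') (ψ + ψ') = dualObj ρ Y φ ψ + dualObj ρ Y' φ' ψ' := by
  simp only [dualObj, Matrix.add_apply, Pi.add_apply, add_mul, sum_add_distrib, ite_add_zero]
  ring

section Yprogram

variable {L : ℕ} {ρ : Fin L → ℝ} (C Y : Matrix (Idx L) (Idx L) ℝ)

lemma Yvalues_nonempty : (Yvalues ρ C Y).Nonempty := by
  obtain ⟨m, hm⟩ := Finite.bddBelow_range fun ab : Idx L × Idx L => (C - Y) ab.1 ab.2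
  refine ⟨_, fun _ _ _ => m, 0, fun p q _ t u => ?_, rfl⟩
  simpa using hm ⟨((p, t), (q, u)), rfl⟩

lemma Yvalues_bddAbove (hρ : ∀ p, 0 ≤ ρ p ∧ ρ p ≤ 1) : BddAbove (Yvalues ρ C Y) := by
  obtain ⟨M, hM⟩ := Finite.bddAbove_range fun ab : Idx L × Idx L => (C - Y) ab.1 ab.2
  refine ⟨2 * ∑ p : Fin L, ∑ q : Fin L, (if p < q then M else 0)
    - ∑ p : Fin L, ∑ t : Fin 2, Y (p, t) (p, t) * mu1 ρ p t, ?_⟩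
  rintro _ ⟨φ, ψ, hfeas, rfl⟩
  unfold dualObj
  gcongr with p _ q _
  split_ifs with hpq
  · exact sum_mul_add_sum_mul_le (mu1_nonneg hρ p) (mu1_nonneg hρ q) (sum_mu1 ρ p) (sum_mu1 ρ q)
      fun t u => (hfeas p q hpq t u).trans (hM ⟨((p, t), (q, u)), rfl⟩)
  · rfl

lemma Yvalues_add_eq_image {D : Matrix (Idx L) (Idx L) ℝ} {δ : Fin L → Fin L → Fin 2 → ℝ}
    (hD : ∀ p q, p < q → ∀ t u, D (p, t) (q, u) = δ p q u) :
    Yvalues ρ C (Y + D) = (· + dualObj ρ D 0 (-δ)) '' Yvalues ρ C Y := by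
  have hshift (φ ψ : Fin L → Fin L → Fin 2 → ℝ) :
      dualObj ρ (Y + D) φ (ψ - δ) = dualObj ρ Y φ ψ + dualObj ρ D 0 (-δ) := by
    rw [← dualObj_add, add_zero, sub_eq_add_neg]
  ext x
  constructor
  · rintro ⟨φ, ψ, hfeas, rfl⟩
    refine ⟨_, ⟨φ, ψ + δ, fun p q hpq t u => ?_, rfl⟩,
      by simp only [← hshift, add_sub_cancel_right]⟩
    have := hfeas p q hpq t u
    simp only [Matrix.add_apply, hD p q hpq, Pi.add_apply] at this ⊢
    linarith
  · rintro ⟨_, ⟨φ, ψ, hfeas, rfl⟩, rfl⟩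
    refine ⟨φ, ψ - δ, fun p q hpq t u => ?_, (hshift φ ψ).symm⟩
    have := hfeas p q hpq t u
    simp only [Matrix.add_apply, hD p q hpq, Pi.sub_apply]
    linarith

lemma fval_add (hρ : ∀ p, 0 ≤ ρ p ∧ ρ p ≤ 1) {D : Matrix (Idx L) (Idx L) ℝ}
    {δ : Fin L → Fin L → Fin 2 → ℝ} (hD : ∀ p q, p < q → ∀ t u, D (p, t) (q, u) = δ p q u) :
    fval ρ C (Y + D) = fval ρ C Y + dualObj ρ D 0 (-δ) := by
  rw [fval, fval, Yvalues_add_eq_image C Y hD]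
  exact ((OrderIso.addRight _).map_csSup' (Yvalues_nonempty C Y) (Yvalues_bddAbove C Y hρ)).symm

end Yprogram

section Pvec

variable {L : ℕ} (i : Fin L) (h : (i : ℕ) + 1 < L)

lemma sum_Pvec_mul (t : Fin 2) (g : Fin L → ℝ) :
    ∑ p, Pvec i h (p, t) * g p = g i - g ⟨i + 1, h⟩ := by
  have hne : i ≠ ⟨i + 1, h⟩ := Fin.ne_of_val_ne (Nat.ne_add_one i)
  rw [Fintype.sum_eq_add i ⟨i + 1, h⟩ hne fun p hp => by simp [Pvec, hp.1, hp.2]]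
  simp [Pvec, hne.symm, sub_eq_add_neg]

lemma sum_Ioi_sub_sum_Ioi_succ (w : Fin L → ℝ) :
    ∑ q ∈ Ioi i, w q - ∑ q ∈ Ioi ⟨i + 1, h⟩, w q = w ⟨i + 1, h⟩ := by
  have : Ioi i = insert ⟨i + 1, h⟩ (Ioi ⟨i + 1, h⟩) := by
    ext q
    simp only [mem_Ioi, mem_insert, Fin.lt_def, Fin.ext_iff]
    omega
  rw [this, sum_insert (by simp)]
  ring

lemma dualObj_Pvec (ρ : Fin L → ℝ) (v : Idx L → ℝ) :
    dualObj ρ (Matrix.of fun a b => Pvec i h a * v b) 0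
        (-fun p q u => Pvec i h (p, 0) * v (q, u))
      = -(∑ t : Fin 2, v (i, t) * mu1 ρ i t)
        - (∑ t : Fin 2, v (⟨(i : ℕ) + 1, h⟩, t) * mu1 ρ ⟨(i : ℕ) + 1, h⟩ t) := by
  set w : Fin L → ℝ := fun q => ∑ t : Fin 2, v (q, t) * mu1 ρ q t
  have hpair : ∑ p, ∑ q,
      (if p < q then -∑ u, Pvec i h (p, 0) * v (q, u) * mu1 ρ q u else 0) = -w ⟨i + 1, h⟩ := by
    rw [← sum_Ioi_sub_sum_Ioi_succ i h w, ← sum_Pvec_mul i h 0 fun p => ∑ q ∈ Ioi p, w q,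
      ← sum_neg_distrib]
    refine sum_congr rfl fun p _ => ?_
    simp only [w, ← filter_lt_eq_Ioi, sum_filter, mul_sum, mul_ite, mul_zero, ← sum_neg_distrib,
      neg_ite, neg_zero, mul_assoc]
  have hdiag : ∑ p, ∑ t, Pvec i h (p, t) * v (p, t) * mu1 ρ p t = w i - w ⟨i + 1, h⟩ := by
    rw [← sum_Pvec_mul i h 0 w]
    exact sum_congr rfl fun p _ => by simp only [w, mul_sum, mul_assoc]; rfl
  simp only [dualObj, Matrix.of_apply, Pi.zero_apply, Pi.neg_apply, zero_mul, sum_const_zero,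
    zero_add, neg_mul, sum_neg_distrib, hpair, hdiag]
  ring

end Pvec

theorem f_row_shift_general (L : ℕ) (ρ : Fin L → ℝ)
    (hρ : ∀ p, 0 ≤ ρ p ∧ ρ p ≤ 1)
    (C : Matrix (Idx L) (Idx L) ℝ)
    (Y : Matrix (Idx L) (Idx L) ℝ)
    (v : Idx L → ℝ) (i : Fin L) (h : (i : ℕ) + 1 < L) :
    fval ρ C (Y + Matrix.of fun a b => Pvec i h a * v b)
      = fval ρ C Y - (∑ t : Fin 2, v (i, t) * mu1 ρ i t)
        - (∑ t : Fin 2, v (⟨(i : ℕ) + 1, h⟩, t) * mu1 ρ ⟨(i : ℕ) + 1, h⟩ t) := by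
  rw [fval_add C Y hρ (δ := fun p q u => Pvec i h (p, 0) * v (q, u)) fun _ _ _ _ _ => rfl,
    dualObj_Pvec]
  ring

/-- Row-shift identity for the `Y`-program value:
`f(Y + P_i vᵀ) = f(Y) − v_i·μ_i^(1) − v_{i+1}·μ_{i+1}^(1)`. -/
theorem f_row_shift (L : ℕ) (hL : 2 ≤ L) (ρ : Fin L → ℝ)
    (hρ : ∀ p, 0 ≤ ρ p ∧ ρ p ≤ 1)
    (C : Matrix (Idx L) (Idx L) ℝ) (hCsymm : C.IsSymm)
    (hCdiag : ∀ p : Fin L, ∀ t u : Fin 2, C (p, t) (p, u) = 0)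
    (Y : Matrix (Idx L) (Idx L) ℝ) (hY : Y.IsSymm)
    (v : Idx L → ℝ) (i : Fin L) (h : (i : ℕ) + 1 < L) :
    fval ρ C (Y + Matrix.of fun a b => Pvec i h a * v b)
      = fval ρ C Y - (∑ t : Fin 2, v (i, t) * mu1 ρ i t)
        - (∑ t : Fin 2, v (⟨(i : ℕ) + 1, h⟩, t) * mu1 ρ ⟨(i : ℕ) + 1, h⟩ t) :=
  f_row_shift_general L ρ hρ C Y v i h
end
end

section
/- Gauge invariance of the Y-program value: Let f(Y) be the optimal value of the Y-program and let P ∈ ℝ^{2L×(L−1)} be the matrix whose i-th column P_i has i-th 2-block 1₂, (i+1)-st 2-block −1₂, and zero blocks otherwise. Then for every Y ∈ ℝ^{2L×2L} and every B ∈ ℝ^{(L−1)×2L}, one has f(Y + P B + Bᵀ Pᵀ) = f(Y). -/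
/-!
Write `g p a := (P B)_{(p,0), a}`. Since every row of `P` is constant on its 2-block,
`P B + Bᵀ Pᵀ` has entries `g p (q, u) + g q (p, t)`, and since the columns of `P` sum to zero,
`∑_q g q a = 0`. Shifting the dual variables to `φ_pq(t) - g q (p, t)` and
`ψ_pq(u) - g p (q, u)` keeps them feasible for the shifted `Y`, and the objective changes by
`-2 ∑_{p,q} ∑_t g p (q, t) μ_q(t) = 0`. Hence both programs have the same set of values.
-/

open Matrix BigOperators

noncomputable section

/-- The matrix `P ∈ ℝ^{2L×(L−1)}` whose `i`-th column has `i`-th 2-block `1₂`,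
`(i+1)`-st 2-block `-1₂`, and zero blocks otherwise. -/
def Pmat (L : ℕ) : Matrix (Idx L) (Fin (L - 1)) ℝ :=
  fun a i =>
    if (a.1 : ℕ) = (i : ℕ) then 1
    else if (a.1 : ℕ) = (i : ℕ) + 1 then -1 else 0

lemma sum_ite_lt_add_sum_diag {ι M : Type*} [Fintype ι] [LinearOrder ι] [AddCommMonoid M]
    (f : ι → ι → M) :
    (∑ p, ∑ q, if p < q then f q p + f p q else 0) + ∑ p, f p p = ∑ p, ∑ q, f p q := by
  have hsplit : ∀ p q, f p q =
      ((if q < p then f p q else 0) + if p < q then f p q else 0) + if p = q then f p q else 0 := by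
    intro p q
    rcases lt_trichotomy p q with h | rfl | h
    · simp [h, h.ne, h.not_gt]
    · simp
    · simp [h, h.ne', h.not_gt]
  have hswap : (∑ p, ∑ q, if q < p then f p q else 0) = ∑ p, ∑ q, if p < q then f q p else 0 :=
    Finset.sum_comm
  conv_rhs => enter [2, p, 2, q]; rw [hsplit p q]
  simp only [ite_add_zero, Finset.sum_add_distrib, hswap, Finset.sum_ite_eq, Finset.mem_univ,
    if_true]

def gaugeMatrix {L : ℕ} (g : Fin L → Idx L → ℝ) : Matrix (Idx L) (Idx L) ℝ :=
  fun a b => g a.1 b + g b.1 a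

lemma gaugeMatrix_neg {L : ℕ} (g : Fin L → Idx L → ℝ) : gaugeMatrix (-g) = -gaugeMatrix g := by
  ext a b
  simp only [gaugeMatrix, Pi.neg_apply, Matrix.neg_apply]
  ring

section Gauge

variable {L : ℕ} (ρ : Fin L → ℝ) {g : Fin L → Idx L → ℝ}

lemma dualObj_add_gaugeMatrix (hg : ∀ a, ∑ q, g q a = 0) (Y : Matrix (Idx L) (Idx L) ℝ)
    (φ ψ : Fin L → Fin L → Fin 2 → ℝ) :
    dualObj ρ (Y + gaugeMatrix g) (fun p q t => φ p q t - g q (p, t))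
      (fun p q u => ψ p q u - g p (q, u)) = dualObj ρ Y φ ψ := by
  set f : Fin L → Fin L → ℝ := fun p q => ∑ t, g p (q, t) * mu1 ρ q t
  have hf : ∑ p, ∑ q, f p q = 0 := by
    rw [Finset.sum_comm]
    refine Finset.sum_eq_zero fun q _ => ?_
    simp only [f]
    rw [Finset.sum_comm]
    simp [← Finset.sum_mul, hg]
  have hpairs : ∀ p q : Fin L, (if p < q then (∑ t, (φ p q t - g q (p, t)) * mu1 ρ p t)
      + (∑ u, (ψ p q u - g p (q, u)) * mu1 ρ q u) else 0)
      = (if p < q then (∑ t, φ p q t * mu1 ρ p t) + (∑ u, ψ p q u * mu1 ρ q u) else 0)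
        - if p < q then f q p + f p q else 0 := by
    intro p q
    split_ifs
    · simp only [f, sub_mul, Finset.sum_sub_distrib]
      ring
    · simp
  have hdiag : ∀ p t, (Y + gaugeMatrix g) (p, t) (p, t) * mu1 ρ p t
      = Y (p, t) (p, t) * mu1 ρ p t + 2 * (g p (p, t) * mu1 ρ p t) := by
    intro p t
    simp only [Matrix.add_apply, gaugeMatrix]
    ring
  have hsum := sum_ite_lt_add_sum_diag f
  simp only [dualObj, hpairs, Finset.sum_sub_distrib, hdiag, Finset.sum_add_distrib,
    ← Finset.mul_sum]
  linear_combination (-2 : ℝ) * hsum - 2 * hf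

variable (C : Matrix (Idx L) (Idx L) ℝ)

lemma Yvalues_subset_add_gaugeMatrix (hg : ∀ a, ∑ q, g q a = 0) (Y : Matrix (Idx L) (Idx L) ℝ) :
    Yvalues ρ C Y ⊆ Yvalues ρ C (Y + gaugeMatrix g) := by
  rintro x ⟨φ, ψ, hfeas, rfl⟩
  refine ⟨fun p q t => φ p q t - g q (p, t), fun p q u => ψ p q u - g p (q, u),
    fun p q hpq t u => ?_, (dualObj_add_gaugeMatrix ρ hg Y φ ψ).symm⟩
  have := hfeas p q hpq t u
  simp only [Matrix.add_apply, gaugeMatrix]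
  linarith

lemma Yvalues_add_gaugeMatrix (hg : ∀ a, ∑ q, g q a = 0) (Y : Matrix (Idx L) (Idx L) ℝ) :
    Yvalues ρ C (Y + gaugeMatrix g) = Yvalues ρ C Y := by
  refine subset_antisymm ?_ (Yvalues_subset_add_gaugeMatrix ρ C hg Y)
  have hneg : ∀ a, ∑ q, (-g) q a = 0 := fun a => by simp [hg]
  simpa [gaugeMatrix_neg] using Yvalues_subset_add_gaugeMatrix ρ C hneg (Y + gaugeMatrix g)

end Gauge

lemma sum_Pmat_apply {L : ℕ} (t : Fin 2) (i : Fin (L - 1)) : ∑ q : Fin L, Pmat L (q, t) i = 0 := by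
  have hi := i.isLt
  let a : Fin L := ⟨i, by omega⟩
  let b : Fin L := ⟨i + 1, by omega⟩
  have hP : ∀ q : Fin L, Pmat L (q, t) i = (if q = a then 1 else 0) - if q = b then 1 else 0 := by
    intro q
    simp only [Pmat, a, b, Fin.ext_iff]
    split_ifs <;> first | omega | norm_num
  simp [hP, Finset.sum_sub_distrib]

lemma Pmat_mul_add_transpose_mul {L : ℕ} (B : Matrix (Fin (L - 1)) (Idx L) ℝ) :
    Pmat L * B + Bᵀ * (Pmat L)ᵀ = gaugeMatrix fun p a => (Pmat L * B) (p, 0) a := by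
  ext a b
  simp only [gaugeMatrix, Matrix.add_apply, Matrix.mul_apply, Matrix.transpose_apply]
  congr 1
  exact Finset.sum_congr rfl fun i _ => by simp only [Pmat]; ring

lemma sum_Pmat_mul_apply {L : ℕ} (B : Matrix (Fin (L - 1)) (Idx L) ℝ) (a : Idx L) :
    ∑ q : Fin L, (Pmat L * B) (q, 0) a = 0 := by
  simp only [Matrix.mul_apply]
  rw [Finset.sum_comm]
  simp [← Finset.sum_mul, sum_Pmat_apply]

theorem f_gauge_invariance_general (L : ℕ) (ρ : Fin L → ℝ)
    (C : Matrix (Idx L) (Idx L) ℝ)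
    (Y : Matrix (Idx L) (Idx L) ℝ) (B : Matrix (Fin (L - 1)) (Idx L) ℝ) :
    fval ρ C (Y + Pmat L * B + Bᵀ * (Pmat L)ᵀ) = fval ρ C Y := by
  rw [fval, fval, add_assoc, Pmat_mul_add_transpose_mul,
    Yvalues_add_gaugeMatrix ρ C (sum_Pmat_mul_apply B)]

/-- Gauge invariance of the `Y`-program value: `f(Y + PB + BᵀPᵀ) = f(Y)`. -/
theorem f_gauge_invariance (L : ℕ) (hL : 2 ≤ L) (ρ : Fin L → ℝ)
    (hρ : ∀ p, 0 ≤ ρ p ∧ ρ p ≤ 1)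
    (C : Matrix (Idx L) (Idx L) ℝ) (hCsymm : C.IsSymm)
    (hCdiag : ∀ p : Fin L, ∀ t u : Fin 2, C (p, t) (p, u) = 0)
    (Y : Matrix (Idx L) (Idx L) ℝ) (B : Matrix (Fin (L - 1)) (Idx L) ℝ) :
    fval ρ C (Y + Pmat L * B + Bᵀ * (Pmat L)ᵀ) = fval ρ C Y :=
  f_gauge_invariance_general L ρ C Y B
end
end
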